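/- arXiv:2409.18321 — 4 statements merged into one kernel-verified Lean document; each statement's English description precedes it below -/
import Mathlib

section
/- Let p be a positive integer, let K : ℝ^p → ℝ be nonnegative, spherically symmetric (K(u) = k(‖u‖₂) for some k), with ∫ (1 + ‖u‖₂⁴) K(u) du < ∞, and set μ₂ = ∫ u₁² K(u) du and κ₀ = ∫ K(u) du. Let f : ℝ^p → ℝ be twice continuously differentiable with bounded first and second derivatives. Fix x ∈ ℝ^p and for h > 0 define the (p+1) × (p+1) matrix A(h) = ∫_{ℝ^p} (1, uᵀ)ᵀ (1, uᵀ) K(u) f(x + h u) du. Then, as h → 0⁺, A(h) − [[κ₀ f(x), h μ₂ ∇f(x)ᵀ], [h μ₂ ∇f(x), μ₂ f(x) I_p]] = O(h²) entrywise; i.e. there exist C > 0 and h₀ > 0 such that every entry of this difference has absolute value at most C h² for all 0 < h ≤ h₀. -/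
open MeasureTheory

/-- The augmented vector `u⁺ = (1, uᵀ)ᵀ`, indexed by `Fin 1 ⊕ Fin p`. -/
def aug {p : ℕ} (u : Fin p → ℝ) : Fin 1 ⊕ Fin p → ℝ :=
  Sum.elim (fun _ => (1 : ℝ)) u

/-!
Expand `f (x + h u) = f x + h f'(x) u + R(u)` with `|R(u)| ≤ C₂ h² ‖u‖²`. Integrated against
`u⁺_a u⁺_b K(u)`, whose weight grows at most like `1 + ‖u‖²`, the remainder contributes
`O(h²)` because `K` has a finite fourth moment. The constant and linear terms are moments of `K`
of order at most three, and radial symmetry evaluates them: invariance under `u ↦ -u` kills the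
odd moments, invariance under flipping the sign of one coordinate kills the mixed second moments,
and invariance under swapping two coordinates makes all diagonal second moments equal to `μ₂`.
-/

namespace LocalDesign

variable {ι : Type*}

theorem integral_eq_zero_of_comp_eq_neg {α : Type*} [MeasurableSpace α] {μ : Measure α}
    (e : α ≃ᵐ α) (he : MeasurePreserving e μ μ) {φ : α → ℝ} (hφ : ∀ u, φ (e u) = -φ u) :
    ∫ u, φ u ∂μ = 0 := by
  have h := he.integral_comp' φ
  simp only [hφ, integral_neg] at h
  linarith

section Symmetries

variable [DecidableEq ι]

def reflectCoord (m : ι) : (ι → ℝ) ≃ᵐ (ι → ℝ) :=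
  MeasurableEquiv.piCongrRight fun i =>
    if i = m then MeasurableEquiv.neg ℝ else MeasurableEquiv.refl ℝ

theorem reflectCoord_apply (m : ι) (u : ι → ℝ) (i : ι) :
    reflectCoord m u i = if i = m then -u i else u i := by
  by_cases h : i = m <;> simp [reflectCoord, MeasurableEquiv.piCongrRight, h]

theorem measurePreserving_reflectCoord [Fintype ι] (m : ι) :
    MeasurePreserving (reflectCoord m) (volume : Measure (ι → ℝ)) volume :=
  volume_preserving_pi fun i => by
    by_cases h : i = m
    · simpa [h] using Measure.measurePreserving_neg (volume : Measure ℝ)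
    · simpa [h] using MeasurePreserving.id (volume : Measure ℝ)

def swapCoord (a b : ι) : (ι → ℝ) ≃ᵐ (ι → ℝ) :=
  MeasurableEquiv.arrowCongr' (Equiv.swap a b) (MeasurableEquiv.refl ℝ)

theorem swapCoord_apply (a b : ι) (u : ι → ℝ) (i : ι) :
    swapCoord a b u i = u (Equiv.swap a b i) := by
  simp [swapCoord, MeasurableEquiv.arrowCongr', Equiv.arrowCongr', Equiv.arrowCongr,
    Equiv.symm_swap]

theorem measurePreserving_swapCoord [Fintype ι] (a b : ι) :
    MeasurePreserving (swapCoord a b) (volume : Measure (ι → ℝ)) volume :=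
  volume_preserving_arrowCongr' _ _ (MeasurePreserving.id volume)

end Symmetries

variable [Fintype ι]

def IsRadial (K : (ι → ℝ) → ℝ) : Prop :=
  ∀ u v : ι → ℝ, ∑ i, u i ^ 2 = ∑ i, v i ^ 2 → K u = K v

theorem isRadial_of_eq_comp_sqrt {K : (ι → ℝ) → ℝ} {k : ℝ → ℝ}
    (hK : ∀ u, K u = k (Real.sqrt (∑ i, u i ^ 2))) : IsRadial K := fun u v huv => by
  rw [hK, hK, huv]

namespace IsRadial

variable {K : (ι → ℝ) → ℝ} (hK : IsRadial K)
include hK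

theorem comp_neg (u : ι → ℝ) : K (-u) = K u :=
  hK _ _ (by simp)

theorem comp_reflectCoord [DecidableEq ι] (m : ι) (u : ι → ℝ) : K (reflectCoord m u) = K u :=
  hK _ _ <| Finset.sum_congr rfl fun i _ => by rw [reflectCoord_apply]; split_ifs <;> ring

theorem comp_swapCoord [DecidableEq ι] (a b : ι) (u : ι → ℝ) : K (swapCoord a b u) = K u :=
  hK _ _ <| by simp_rw [swapCoord_apply]; exact Equiv.sum_comp (Equiv.swap a b) (fun i => u i ^ 2)

theorem integral_mul_eq_zero_of_odd {φ : (ι → ℝ) → ℝ} (hφ : ∀ u, φ (-u) = -φ u) :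
    ∫ u, φ u * K u = 0 :=
  integral_eq_zero_of_comp_eq_neg (MeasurableEquiv.neg _) (Measure.measurePreserving_neg volume)
    fun u => by simp [hφ, hK.comp_neg]

theorem integral_coord_mul (i : ι) : ∫ u, u i * K u = 0 :=
  hK.integral_mul_eq_zero_of_odd fun u => by simp

theorem integral_mul_clm (L : (ι → ℝ) →L[ℝ] ℝ) : ∫ u, K u * L u = 0 := by
  simpa only [mul_comm] using hK.integral_mul_eq_zero_of_odd (φ := L) fun u => by simp

theorem integral_coord_mul_coord_mul_clm (L : (ι → ℝ) →L[ℝ] ℝ) (i j : ι) :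
    ∫ u, u i * u j * K u * L u = 0 := by
  simpa only [mul_right_comm _ (K _)] using
    hK.integral_mul_eq_zero_of_odd (φ := fun u => u i * u j * L u) fun u => by simp

theorem integral_coord_mul_coord_mul [DecidableEq ι] (i₀ i j : ι) :
    ∫ u, u i * u j * K u = if i = j then ∫ u, u i₀ ^ 2 * K u else 0 := by
  split_ifs with hij
  · subst hij
    rw [← (measurePreserving_swapCoord i₀ i).integral_comp']
    simp [swapCoord_apply, hK.comp_swapCoord, sq]
  · refine integral_eq_zero_of_comp_eq_neg _ (measurePreserving_reflectCoord i) fun u => ?_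
    simp [reflectCoord_apply, Ne.symm hij, hK.comp_reflectCoord]

end IsRadial

theorem sq_coord_le_sum_sq (u : ι → ℝ) (i : ι) : u i ^ 2 ≤ ∑ j, u j ^ 2 :=
  Finset.single_le_sum (f := fun j => u j ^ 2) (fun _ _ => sq_nonneg _) (Finset.mem_univ i)

theorem sq_norm_le_sum_sq (u : ι → ℝ) : ‖u‖ ^ 2 ≤ ∑ i, u i ^ 2 := by
  have hS : 0 ≤ ∑ i, u i ^ 2 := Finset.sum_nonneg fun i _ => sq_nonneg _
  refine (Real.le_sqrt (norm_nonneg _) hS).1 <| (pi_norm_le_iff_of_nonneg (Real.sqrt_nonneg _)).2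
    fun i => ?_
  exact Real.abs_le_sqrt (sq_coord_le_sum_sq u i)

theorem abs_coord_le_one_add_sum_sq (u : ι → ℝ) (i : ι) : |u i| ≤ 1 + ∑ j, u j ^ 2 := by
  nlinarith [sq_coord_le_sum_sq u i, sq_abs (u i), sq_nonneg (|u i| - 1)]

theorem norm_le_one_add_sum_sq (u : ι → ℝ) : ‖u‖ ≤ 1 + ∑ i, u i ^ 2 := by
  nlinarith [sq_norm_le_sum_sq u, sq_nonneg (‖u‖ - 1)]

section Integrability

variable {K : (ι → ℝ) → ℝ} (hK_nonneg : ∀ u, 0 ≤ K u)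
  (hK_int : Integrable (fun u : ι → ℝ => (1 + (∑ i, u i ^ 2) ^ 2) * K u))

include hK_int in
theorem aestronglyMeasurable_of_integrable_weight : AEStronglyMeasurable K := by
  have hpos : ∀ u : ι → ℝ, 0 < 1 + (∑ i, u i ^ 2) ^ 2 := fun u => by positivity
  have hcont : Continuous fun u : ι → ℝ => (1 + (∑ i, u i ^ 2) ^ 2)⁻¹ :=
    (by fun_prop : Continuous fun u : ι → ℝ => 1 + (∑ i, u i ^ 2) ^ 2).inv₀ fun u => (hpos u).ne'
  refine (hcont.aestronglyMeasurable.mul hK_int.1).congr (.of_forall fun u => ?_)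
  exact inv_mul_cancel_left₀ (hpos u).ne' (K u)

include hK_nonneg hK_int in
theorem integrable_sq_one_add_sum_sq_mul :
    Integrable fun u : ι → ℝ => (1 + ∑ i, u i ^ 2) ^ 2 * K u := by
  refine (hK_int.const_mul 2).mono' ((by fun_prop : Continuous fun u : ι → ℝ =>
    (1 + ∑ i, u i ^ 2) ^ 2).aestronglyMeasurable.mul
    (aestronglyMeasurable_of_integrable_weight hK_int)) (.of_forall fun u => ?_)
  rw [Real.norm_eq_abs, abs_of_nonneg (mul_nonneg (sq_nonneg _) (hK_nonneg u)), ← mul_assoc]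
  exact mul_le_mul_of_nonneg_right (by nlinarith [sq_nonneg (1 - ∑ i, u i ^ 2)]) (hK_nonneg u)

include hK_nonneg hK_int in
theorem integrable_mul_of_abs_le {g : (ι → ℝ) → ℝ} (hg : Continuous g) (c : ℝ)
    (hgc : ∀ u, |g u| ≤ c * (1 + ∑ i, u i ^ 2) ^ 2) : Integrable fun u => g u * K u := by
  refine ((integrable_sq_one_add_sum_sq_mul hK_nonneg hK_int).const_mul c).mono'
    (hg.aestronglyMeasurable.mul (aestronglyMeasurable_of_integrable_weight hK_int))
    (.of_forall fun u => ?_)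
  rw [norm_mul, Real.norm_eq_abs, Real.norm_eq_abs, abs_of_nonneg (hK_nonneg u), ← mul_assoc]
  exact mul_le_mul_of_nonneg_right (hgc u) (hK_nonneg u)

end Integrability

theorem clm_apply_eq_sum [DecidableEq ι] (L : (ι → ℝ) →L[ℝ] ℝ) (u : ι → ℝ) :
    L u = ∑ l, u l * L (Pi.single l 1) := by
  conv_lhs => rw [pi_eq_sum_univ' u]
  simp [map_sum]

theorem IsRadial.integral_coord_mul_mul_clm [DecidableEq ι] {K : (ι → ℝ) → ℝ} (hK : IsRadial K)
    (hK_nonneg : ∀ u, 0 ≤ K u)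
    (hK_int : Integrable (fun u : ι → ℝ => (1 + (∑ i, u i ^ 2) ^ 2) * K u))
    (L : (ι → ℝ) →L[ℝ] ℝ) (i₀ j : ι) :
    ∫ u, u j * K u * L u = (∫ u, u i₀ ^ 2 * K u) * L (Pi.single j 1) := by
  have hint : ∀ l, Integrable fun u : ι → ℝ => u j * u l * K u := fun l =>
    integrable_mul_of_abs_le hK_nonneg hK_int (by fun_prop) 1 fun u => by
      rw [abs_mul, one_mul, sq]
      exact mul_le_mul (abs_coord_le_one_add_sum_sq u j) (abs_coord_le_one_add_sum_sq u l)
        (abs_nonneg _) (by positivity)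
  calc ∫ u, u j * K u * L u
      = ∑ l, L (Pi.single l 1) * ∫ u, u j * u l * K u := by
        simp_rw [← integral_const_mul]
        rw [← integral_finsetSum _ fun l _ => (hint l).const_mul _]
        refine integral_congr_ae (.of_forall fun u => ?_)
        simp only [clm_apply_eq_sum L u, Finset.mul_sum]
        exact Finset.sum_congr rfl fun l _ => by ring
    _ = (∫ u, u i₀ ^ 2 * K u) * L (Pi.single j 1) := by
        simp only [hK.integral_coord_mul_coord_mul i₀, mul_ite, mul_zero, Finset.sum_ite_eq,
          Finset.mem_univ, if_true]
        ring

section Taylor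

variable {E F : Type*} [NormedAddCommGroup E] [NormedSpace ℝ E] [NormedAddCommGroup F]
  [NormedSpace ℝ F] {f : E → F} {C : ℝ}

theorem norm_fderiv_fderiv_le_of_norm_iteratedFDeriv_two_le
    (hC : ∀ y, ‖iteratedFDeriv ℝ 2 f y‖ ≤ C) (y : E) : ‖fderiv ℝ (fderiv ℝ f) y‖ ≤ C := by
  have h0 : ‖iteratedFDeriv ℝ 0 (fderiv ℝ (fderiv ℝ f)) y‖ = ‖iteratedFDeriv ℝ 1 (fderiv ℝ f) y‖ :=
    norm_iteratedFDeriv_fderiv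
  rw [norm_iteratedFDeriv_zero, norm_iteratedFDeriv_fderiv] at h0
  exact h0 ▸ hC y

theorem norm_sub_sub_fderiv_le (hf : ContDiff ℝ 2 f) (hC : ∀ y, ‖iteratedFDeriv ℝ 2 f y‖ ≤ C)
    (x v : E) : ‖f (x + v) - f x - fderiv ℝ f x v‖ ≤ C * ‖v‖ ^ 2 := by
  have hf' : Differentiable ℝ (fderiv ℝ f) := (hf.fderiv_right le_rfl).differentiable one_ne_zero
  have hlip : ∀ z ∈ Metric.closedBall x ‖v‖, ‖fderiv ℝ f z - fderiv ℝ f x‖ ≤ C * ‖v‖ := by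
    intro z hz
    calc ‖fderiv ℝ f z - fderiv ℝ f x‖ ≤ C * ‖z - x‖ :=
          convex_univ.norm_image_sub_le_of_norm_fderiv_le (fun w _ => hf'.differentiableAt)
            (fun w _ => norm_fderiv_fderiv_le_of_norm_iteratedFDeriv_two_le hC w)
            (Set.mem_univ x) (Set.mem_univ z)
      _ ≤ C * ‖v‖ := mul_le_mul_of_nonneg_left (mem_closedBall_iff_norm.1 hz)
          ((norm_nonneg _).trans (hC x))
  have := (convex_closedBall x ‖v‖).norm_image_sub_le_of_norm_fderiv_le'
    (fun z _ => (hf.differentiable two_ne_zero).differentiableAt) hlip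
    (Metric.mem_closedBall_self (norm_nonneg v)) (by simp : x + v ∈ Metric.closedBall x ‖v‖)
  rw [add_sub_cancel_left] at this
  linarith

end Taylor

theorem abs_integral_mul_sub_taylor_le {K : (ι → ℝ) → ℝ} (hK_nonneg : ∀ u, 0 ≤ K u)
    (hK_int : Integrable (fun u : ι → ℝ => (1 + (∑ i, u i ^ 2) ^ 2) * K u))
    {f : (ι → ℝ) → ℝ} (hf : ContDiff ℝ 2 f) {C : ℝ} (hC : ∀ y, ‖iteratedFDeriv ℝ 2 f y‖ ≤ C)
    (x : ι → ℝ) (h : ℝ) {w : (ι → ℝ) → ℝ} (hw : Continuous w)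
    (hwb : ∀ u, |w u| ≤ 1 + ∑ i, u i ^ 2) :
    |(∫ u, w u * K u * f (x + h • u)) -
        ((∫ u, w u * K u) * f x + h * ∫ u, w u * K u * fderiv ℝ f x u)| ≤
      C * (∫ u, (1 + ∑ i, u i ^ 2) ^ 2 * K u) * h ^ 2 := by
  set L := fderiv ℝ f x
  set R : (ι → ℝ) → ℝ := fun u => f (x + h • u) - f x - L (h • u) with hR_def
  have hR : ∀ u, |R u| ≤ C * h ^ 2 * ∑ i, u i ^ 2 := fun u => by
    have hC0 : 0 ≤ C := (norm_nonneg _).trans (hC x)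
    calc |R u| ≤ C * ‖h • u‖ ^ 2 := norm_sub_sub_fderiv_le hf hC x (h • u)
      _ ≤ C * h ^ 2 * ∑ i, u i ^ 2 := by
        rw [norm_smul, mul_pow, Real.norm_eq_abs, sq_abs, mul_assoc]
        gcongr
        exact sq_norm_le_sum_sq u
  have hwR : ∀ u, |w u * R u| ≤ C * h ^ 2 * (1 + ∑ i, u i ^ 2) ^ 2 := fun u => by
    have hS : 0 ≤ ∑ i, u i ^ 2 := Finset.sum_nonneg fun i _ => sq_nonneg (u i)
    have hCh : 0 ≤ C * h ^ 2 := mul_nonneg ((norm_nonneg _).trans (hC x)) (sq_nonneg h)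
    rw [abs_mul]
    calc |w u| * |R u| ≤ (1 + ∑ i, u i ^ 2) * (C * h ^ 2 * ∑ i, u i ^ 2) :=
          mul_le_mul (hwb u) (hR u) (abs_nonneg _) (by positivity)
      _ ≤ C * h ^ 2 * (1 + ∑ i, u i ^ 2) ^ 2 := by nlinarith
  have hR_cont : Continuous R := by
    have := hf.continuous; fun_prop
  have i0 : Integrable fun u => w u * K u :=
    integrable_mul_of_abs_le hK_nonneg hK_int hw 1 fun u => by
      have hS : 0 ≤ ∑ i, u i ^ 2 := Finset.sum_nonneg fun i _ => sq_nonneg (u i)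
      rw [one_mul]
      exact (hwb u).trans (le_self_pow₀ (le_add_of_nonneg_right hS) two_ne_zero)
  have i1 : Integrable fun u => w u * K u * L u := by
    refine (integrable_mul_of_abs_le hK_nonneg hK_int (g := fun u => w u * L u) (by fun_prop) ‖L‖
      fun u => ?_).congr (.of_forall fun u => by ring)
    rw [abs_mul]
    calc |w u| * |L u| ≤ (1 + ∑ i, u i ^ 2) * (‖L‖ * (1 + ∑ i, u i ^ 2)) :=
          mul_le_mul (hwb u) ((L.le_opNorm u).trans (mul_le_mul_of_nonneg_left
            (norm_le_one_add_sum_sq u) (norm_nonneg L))) (abs_nonneg _)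
            ((abs_nonneg _).trans (hwb u))
      _ = ‖L‖ * (1 + ∑ i, u i ^ 2) ^ 2 := by ring
  have i2 : Integrable fun u => w u * K u * R u :=
    (integrable_mul_of_abs_le hK_nonneg hK_int (g := fun u => w u * R u) (by fun_prop) _ hwR).congr
      (.of_forall fun u => by ring)
  have hsplit : ∫ u, w u * K u * f (x + h • u) =
      (∫ u, w u * K u) * f x + h * (∫ u, w u * K u * L u) + ∫ u, w u * K u * R u := by
    have hpt : ∀ u, w u * K u * f (x + h • u) =
        (w u * K u * f x + h * (w u * K u * L u)) + w u * K u * R u := fun u => by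
      simp only [hR_def, map_smul, smul_eq_mul]
      ring
    have i01 : Integrable fun u => w u * K u * f x + h * (w u * K u * L u) :=
      (i0.mul_const _).add (i1.const_mul _)
    simp_rw [hpt]
    rw [integral_add i01 i2,
      integral_add (i0.mul_const _) (i1.const_mul _), integral_mul_const, integral_const_mul]
  rw [hsplit, add_sub_cancel_left]
  calc |∫ u, w u * K u * R u| ≤ ∫ u, |w u * K u * R u| := abs_integral_le_integral_abs
    _ ≤ ∫ u, C * h ^ 2 * ((1 + ∑ i, u i ^ 2) ^ 2 * K u) :=
        integral_mono i2.abs ((integrable_sq_one_add_sum_sq_mul hK_nonneg hK_int).const_mul _)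
          fun u => by
            rw [mul_right_comm, abs_mul _ (K u), abs_of_nonneg (hK_nonneg u), ← mul_assoc]
            exact mul_le_mul_of_nonneg_right (hwR u) (hK_nonneg u)
    _ = C * (∫ u, (1 + ∑ i, u i ^ 2) ^ 2 * K u) * h ^ 2 := by
        rw [integral_const_mul]; ring

section Aug

variable {p : ℕ}

theorem continuous_aug (a : Fin 1 ⊕ Fin p) : Continuous fun u : Fin p → ℝ => aug u a := by
  cases a <;> simp only [aug, Sum.elim_inl, Sum.elim_inr] <;> fun_prop

theorem sq_aug_le (u : Fin p → ℝ) (a : Fin 1 ⊕ Fin p) : aug u a ^ 2 ≤ 1 + ∑ i, u i ^ 2 := by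
  have hS : 0 ≤ ∑ i, u i ^ 2 := Finset.sum_nonneg fun i _ => sq_nonneg (u i)
  cases a with
  | inl => simp only [aug, Sum.elim_inl]; linarith
  | inr i => simp only [aug, Sum.elim_inr]; linarith [sq_coord_le_sum_sq u i]

theorem abs_aug_mul_aug_le (u : Fin p → ℝ) (a b : Fin 1 ⊕ Fin p) :
    |aug u a * aug u b| ≤ 1 + ∑ i, u i ^ 2 := by
  rw [abs_mul]
  nlinarith [sq_aug_le u a, sq_aug_le u b, sq_abs (aug u a), sq_abs (aug u b),
    sq_nonneg (|aug u a| - |aug u b|)]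

end Aug

end LocalDesign

open LocalDesign

/-- Expansion of the expected normalized weighted design matrix
`A(h) = ∫ (1,uᵀ)ᵀ (1,uᵀ) K(u) f(x+hu) du`: as `h → 0⁺`,
`A(h) = [[κ₀ f(x), h μ₂ ∇f(x)ᵀ], [h μ₂ ∇f(x), μ₂ f(x) I_p]] + O(h²)`
entrywise, where `κ₀ = ∫ K`, `μ₂ = ∫ u₁² K(u) du`. -/
theorem stmt6 (p : ℕ) (hp : 0 < p)
    (K : (Fin p → ℝ) → ℝ) (hK_nonneg : ∀ u, 0 ≤ K u)
    (k : ℝ → ℝ) (hK_sym : ∀ u, K u = k (Real.sqrt (∑ i, u i ^ 2)))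
    (hK_int : Integrable (fun u : Fin p → ℝ => (1 + (∑ i, u i ^ 2) ^ 2) * K u) volume)
    (f : (Fin p → ℝ) → ℝ) (hf : ContDiff ℝ 2 f)
    (hf_bdd : ∀ i : ℕ, 1 ≤ i → i ≤ 2 → ∃ C, ∀ y, ‖iteratedFDeriv ℝ i f y‖ ≤ C)
    (x : Fin p → ℝ) :
    ∃ C > 0, ∃ h₀ > 0, ∀ h : ℝ, 0 < h → h ≤ h₀ →
      ∀ a b : Fin 1 ⊕ Fin p,
        |(∫ u : Fin p → ℝ, aug u a * aug u b * K u * f (x + h • u)) -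
            (match a, b with
              | Sum.inl _, Sum.inl _ => (∫ u : Fin p → ℝ, K u) * f x
              | Sum.inl _, Sum.inr j =>
                  h * (∫ u : Fin p → ℝ, u ⟨0, hp⟩ ^ 2 * K u) *
                    fderiv ℝ f x (Pi.single j 1)
              | Sum.inr i, Sum.inl _ =>
                  h * (∫ u : Fin p → ℝ, u ⟨0, hp⟩ ^ 2 * K u) *
                    fderiv ℝ f x (Pi.single i 1)
              | Sum.inr i, Sum.inr j =>
                  (∫ u : Fin p → ℝ, u ⟨0, hp⟩ ^ 2 * K u) * f x *
                    (if i = j then 1 else 0))|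
          ≤ C * h ^ 2 := by
  obtain ⟨C₂, hC₂⟩ := hf_bdd 2 one_le_two le_rfl
  have hK := isRadial_of_eq_comp_sqrt hK_sym
  set M := ∫ u : Fin p → ℝ, (1 + ∑ i, u i ^ 2) ^ 2 * K u
  have hC₂0 : 0 ≤ C₂ := (norm_nonneg _).trans (hC₂ x)
  have hM0 : 0 ≤ M := integral_nonneg fun u => mul_nonneg (sq_nonneg _) (hK_nonneg u)
  refine ⟨C₂ * M + 1, by positivity, 1, one_pos, fun h _ _ a b => ?_⟩
  have hrem := abs_integral_mul_sub_taylor_le hK_nonneg hK_int hf hC₂ x h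
    (w := fun u => aug u a * aug u b) ((continuous_aug a).mul (continuous_aug b))
    (abs_aug_mul_aug_le · a b)
  refine le_trans (le_of_eq ?_) (hrem.trans ?_)
  · congr 2
    rcases a with _ | i <;> rcases b with _ | j <;>
      simp only [aug, Sum.elim_inl, Sum.elim_inr, one_mul, mul_one, hK.integral_mul_clm,
        hK.integral_coord_mul, hK.integral_coord_mul_coord_mul_clm,
        hK.integral_coord_mul_coord_mul ⟨0, hp⟩,
        hK.integral_coord_mul_mul_clm hK_nonneg hK_int _ ⟨0, hp⟩, mul_ite, ite_mul, mul_zero,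
        zero_mul, add_zero] <;> ring
  · nlinarith [sq_nonneg h]
end

section
/- Let p be a positive integer, let K : ℝ^p → ℝ be nonnegative, spherically symmetric, with ∫ (1 + ‖u‖₂⁶) K(u) du < ∞, and set μ₂ = ∫ u₁² K(u) du. Let m : ℝ^p → ℝ be four times continuously differentiable with bounded derivatives up to order four, and let f : ℝ^p → ℝ be twice continuously differentiable with bounded derivatives up to order two. Fix x ∈ ℝ^p. Then, as h → 0⁺, ∫_{ℝ^p} [ m(x + h u) − m(x) − h ∇m(x)ᵀ u ] K(u) f(x + h u) du = (h²/2) μ₂ f(x) Tr(∇²m(x)) + O(h⁴), where ∇²m(x) is the Hessian of m at x. -/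
/-!
Taylor's formula with integral remainder, applied along the segment `t ↦ x + t • h • u`, gives
`m (x + h u) - m x - h m'(x) u = h²/2 m''(x)(u,u) + h³/6 m'''(x)(u,u,u) + O(h⁴ ‖u‖⁴)` and
`f (x + h u) = f x + h f'(x) u + O(h² ‖u‖²)`, with constants controlled by the global bounds on
`m⁽⁴⁾` and `f''`. Multiplying out, the integrand equals `K u` times
`h²/2 f(x) m''(x)(u,u) + h³ · (a cubic odd in u) + O(h⁴ (1 + ‖u‖⁶))`.
The moment condition on `K` makes every term integrable, the odd term integrates to zero
because `K` is even, and the second moments of a radial kernel are `∫ uᵢ uⱼ K = δᵢⱼ μ₂`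
(reflect one coordinate for `i ≠ j`, swap two coordinates for `i = j`), so the quadratic term
integrates to `μ₂ Tr m''(x)`.
-/

open MeasureTheory Finset Nat

theorem pow_le_one_add_pow {s : ℝ} (hs : 0 ≤ s) {j n : ℕ} (hjn : j ≤ n) : s ^ j ≤ 1 + s ^ n := by
  rcases le_total s 1 with hs1 | hs1
  · linarith [pow_le_one₀ hs hs1 (n := j), pow_nonneg hs n]
  · linarith [pow_le_pow_right₀ hs1 hjn]

theorem abs_mul_add_le {h s l e Cl Ce : ℝ} (h0 : 0 ≤ h) (h1 : h ≤ 1) (hl : |l| ≤ Cl * s)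
    (he : |e| ≤ Ce * (h ^ 2 * s ^ 2)) (hCe : 0 ≤ Ce) :
    |h * l + e| ≤ h * (Cl * s + Ce * s ^ 2) := by
  have : h ^ 2 ≤ h := by nlinarith
  calc |h * l + e| ≤ |h| * |l| + |e| := by rw [← abs_mul]; exact abs_add_le _ _
    _ ≤ h * (Cl * s) + Ce * (h * s ^ 2) := by
      rw [abs_of_nonneg h0]; gcongr; exact he.trans (by gcongr)
    _ = h * (Cl * s + Ce * s ^ 2) := by ring

/-- Here `q`, `t`, `l` stand for `m''(x)(u,u)`, `m'''(x)(u,u,u)`, `f'(x) u`, while `r` and `e` are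
the Taylor remainders of `m` and `f`, and `s = ‖u‖`. -/
theorem abs_mul_expansion_sub_le {h s q t r l e a Cq Ct Cr Cl Ce : ℝ} (h0 : 0 ≤ h) (h1 : h ≤ 1)
    (hs : 0 ≤ s) (hCq : 0 ≤ Cq) (hCt : 0 ≤ Ct) (hCr : 0 ≤ Cr) (hCl : 0 ≤ Cl) (hCe : 0 ≤ Ce)
    (hq : |q| ≤ Cq * s ^ 2) (ht : |t| ≤ Ct * s ^ 3) (hr : |r| ≤ Cr * (h ^ 4 * s ^ 4))
    (hl : |l| ≤ Cl * s) (he : |e| ≤ Ce * (h ^ 2 * s ^ 2)) :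
    |(h ^ 2 / 2 * q + h ^ 3 / 6 * t + r) * (a + h * l + e)
        - (h ^ 2 / 2 * a * q + h ^ 3 * (q * l / 2 + t * a / 6))|
      ≤ (Cq * Ce / 2 + Ct * (Cl + Ce) / 6 + Cr * (|a| + Cl + Ce)) * h ^ 4 * (1 + s ^ 6) := by
  have hle := abs_mul_add_le h0 h1 hl he hCe
  have hale : |a + h * l + e| ≤ |a| + (Cl * s + Ce * s ^ 2) := by
    rw [add_assoc]
    refine (abs_add_le _ _).trans ?_
    gcongr
    exact hle.trans (mul_le_of_le_one_left (by positivity) h1)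
  have hqe : |q * e| ≤ Cq * s ^ 2 * (Ce * (h ^ 2 * s ^ 2)) := by
    rw [abs_mul]; exact mul_le_mul hq he (abs_nonneg _) (by positivity)
  have htle : |t * (h * l + e)| ≤ Ct * s ^ 3 * (h * (Cl * s + Ce * s ^ 2)) := by
    rw [abs_mul]; exact mul_le_mul ht hle (abs_nonneg _) (by positivity)
  have hrale : |r * (a + h * l + e)| ≤ Cr * (h ^ 4 * s ^ 4) * (|a| + (Cl * s + Ce * s ^ 2)) := by
    rw [abs_mul]; exact mul_le_mul hr hale (abs_nonneg _) (by positivity)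
  rw [show (h ^ 2 / 2 * q + h ^ 3 / 6 * t + r) * (a + h * l + e)
      - (h ^ 2 / 2 * a * q + h ^ 3 * (q * l / 2 + t * a / 6))
      = h ^ 2 / 2 * (q * e) + h ^ 3 / 6 * (t * (h * l + e)) + r * (a + h * l + e) by ring]
  calc _ ≤ h ^ 2 / 2 * |q * e| + h ^ 3 / 6 * |t * (h * l + e)| + |r * (a + h * l + e)| := by
        refine (abs_add_three _ _ _).trans_eq ?_
        rw [abs_mul (h ^ 2 / 2), abs_mul (h ^ 3 / 6), abs_of_nonneg (by positivity : 0 ≤ h ^ 2 / 2),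
          abs_of_nonneg (by positivity : 0 ≤ h ^ 3 / 6)]
    _ ≤ h ^ 4 * ((Cq * Ce / 2 + Ct * Cl / 6 + Cr * |a|) * s ^ 4 + (Ct * Ce / 6 + Cr * Cl) * s ^ 5
          + Cr * Ce * s ^ 6) := by
        have := mul_le_mul_of_nonneg_left hqe (by positivity : 0 ≤ h ^ 2 / 2)
        have := mul_le_mul_of_nonneg_left htle (by positivity : 0 ≤ h ^ 3 / 6)
        nlinarith
    _ ≤ h ^ 4 * ((Cq * Ce / 2 + Ct * (Cl + Ce) / 6 + Cr * (|a| + Cl + Ce)) * (1 + s ^ 6)) := by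
        gcongr
        have := abs_nonneg a
        have c4 : 0 ≤ Cq * Ce / 2 + Ct * Cl / 6 + Cr * |a| := by positivity
        have c5 : 0 ≤ Ct * Ce / 6 + Cr * Cl := by positivity
        nlinarith [mul_le_mul_of_nonneg_left (pow_le_one_add_pow hs (by norm_num : 4 ≤ 6)) c4,
          mul_le_mul_of_nonneg_left (pow_le_one_add_pow hs (by norm_num : 5 ≤ 6)) c5,
          mul_le_mul_of_nonneg_left (pow_le_one_add_pow hs le_rfl (n := 6)) (mul_nonneg hCr hCe)]
    _ = _ := by ring

section Taylor

variable {E : Type*} [NormedAddCommGroup E] [NormedSpace ℝ E]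

theorem ContinuousMultilinearMap.map_const_smul {n : ℕ}
    (A : ContinuousMultilinearMap ℝ (fun _ : Fin n ↦ E) ℝ) (c : ℝ) (y : E) :
    A (fun _ ↦ c • y) = c ^ n * A (fun _ ↦ y) := by
  simpa using A.map_smul_univ (fun _ ↦ c) (fun _ ↦ y)

theorem ContinuousMultilinearMap.abs_apply_const_le {n : ℕ}
    (A : ContinuousMultilinearMap ℝ (fun _ : Fin n ↦ E) ℝ) (y : E) :
    |A (fun _ ↦ y)| ≤ ‖A‖ * ‖y‖ ^ n := by
  simpa using A.le_opNorm_mul_pow_of_le (m := fun _ ↦ y) (pi_norm_const_le y)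

theorem abs_bilin_apply_self_le (B : E →L[ℝ] E →L[ℝ] ℝ) (u : E) : |B u u| ≤ ‖B‖ * ‖u‖ ^ 2 := by
  simpa [sq, mul_assoc] using B.le_opNorm₂ u u

theorem norm_sub_taylorSum_le {F : Type*} [NormedAddCommGroup F] [NormedSpace ℝ F]
    [CompleteSpace F] {f : E → F} {n : ℕ} (hf : ContDiff ℝ (n + 1) f) {C : ℝ}
    (hC : ∀ z, ‖iteratedFDeriv ℝ (n + 1) f z‖ ≤ C) (x y : E) :
    ‖f (x + y) - ∑ k ∈ range (n + 1), (k ! : ℝ)⁻¹ • iteratedFDeriv ℝ k f x (fun _ ↦ y)‖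
      ≤ (n ! : ℝ)⁻¹ * (C * ‖y‖ ^ (n + 1)) := by
  rw [map_add_eq_sum_add_integral_iteratedFDeriv fun t _ ↦ hf.contDiffAt, add_sub_cancel_left,
    norm_smul, norm_inv, norm_natCast]
  gcongr
  refine (intervalIntegral.norm_integral_le_of_norm_le_const (C := C * ‖y‖ ^ (n + 1))
    fun t ht ↦ ?_).trans_eq (by simp)
  rw [Set.uIoc_of_le zero_le_one] at ht
  rw [norm_smul, norm_pow, Real.norm_of_nonneg (by linarith [ht.2])]
  calc (1 - t) ^ n * ‖iteratedFDeriv ℝ (n + 1) f (x + t • y) (fun _ ↦ y)‖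
      ≤ 1 * (C * ‖y‖ ^ (n + 1)) := by
        gcongr
        · exact pow_le_one₀ (by linarith [ht.2]) (by linarith [ht.1])
        · exact ((iteratedFDeriv ℝ (n + 1) f _).le_opNorm_mul_pow_of_le (pi_norm_const_le y)).trans
            (by gcongr; exact hC _)
    _ = C * ‖y‖ ^ (n + 1) := one_mul _

theorem abs_taylorRemainder_three_le {g : E → ℝ} (hg : ContDiff ℝ 4 g) {C : ℝ}
    (hC : ∀ z, ‖iteratedFDeriv ℝ 4 g z‖ ≤ C) (x u : E) (h : ℝ) :
    |g (x + h • u) - (g x + h * fderiv ℝ g x u + h ^ 2 / 2 * fderiv ℝ (fderiv ℝ g) x u u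
        + h ^ 3 / 6 * iteratedFDeriv ℝ 3 g x (fun _ ↦ u))| ≤ C / 6 * (h ^ 4 * ‖u‖ ^ 4) := by
  have := norm_sub_taylorSum_le (n := 3) hg hC x (h • u)
  simp only [sum_range_succ, range_one, sum_singleton, ContinuousMultilinearMap.map_const_smul,
    iteratedFDeriv_zero_apply, iteratedFDeriv_one_apply, iteratedFDeriv_two_apply] at this
  refine le_of_eq_of_le ?_ (this.trans_eq ?_)
  · rw [Real.norm_eq_abs]; congr 2; simp [factorial]; ring
  · rw [norm_smul, mul_pow, Real.norm_eq_abs, (by decide : Even (3 + 1)).pow_abs]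
    simp [factorial]; ring

theorem abs_taylorRemainder_one_le {g : E → ℝ} (hg : ContDiff ℝ 2 g) {C : ℝ}
    (hC : ∀ z, ‖iteratedFDeriv ℝ 2 g z‖ ≤ C) (x u : E) (h : ℝ) :
    |g (x + h • u) - (g x + h * fderiv ℝ g x u)| ≤ C * (h ^ 2 * ‖u‖ ^ 2) := by
  have := norm_sub_taylorSum_le (n := 1) hg hC x (h • u)
  simp only [sum_range_succ, range_one, sum_singleton, iteratedFDeriv_zero_apply,
    iteratedFDeriv_one_apply] at this
  refine le_of_eq_of_le ?_ (this.trans_eq ?_)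
  · rw [Real.norm_eq_abs]; simp
  · rw [norm_smul, mul_pow, Real.norm_eq_abs, sq_abs]
    simp

/-- With `B = m''(x)`, `L = f'(x)`, `T = m'''(x)` and `a = f x`, this is the coefficient of `h ^ 3`
in `(m (x + h • u) - m x - h * m'(x) u) * f (x + h • u)`. -/
noncomputable def cubicCoeff (B : E →L[ℝ] E →L[ℝ] ℝ) (L : E →L[ℝ] ℝ)
    (T : ContinuousMultilinearMap ℝ (fun _ : Fin 3 ↦ E) ℝ) (a : ℝ) (u : E) : ℝ :=
  B u u * L u / 2 + T (fun _ ↦ u) * a / 6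

variable (B : E →L[ℝ] E →L[ℝ] ℝ) (L : E →L[ℝ] ℝ)
  (T : ContinuousMultilinearMap ℝ (fun _ : Fin 3 ↦ E) ℝ) (a : ℝ)

theorem cubicCoeff_neg (u : E) : cubicCoeff B L T a (-u) = -cubicCoeff B L T a u := by
  have hT : T (fun _ ↦ -u) = -T (fun _ ↦ u) := by
    rw [← neg_one_smul ℝ u, T.map_const_smul]
    ring
  simp only [cubicCoeff, hT, map_neg, neg_apply]
  ring

theorem abs_cubicCoeff_le (u : E) :
    |cubicCoeff B L T a u| ≤ (‖B‖ * ‖L‖ / 2 + ‖T‖ * |a| / 6) * ‖u‖ ^ 3 := by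
  calc _ ≤ |B u u| * |L u| / 2 + |T (fun _ ↦ u)| * |a| / 6 := by
        refine (abs_add_le _ _).trans_eq ?_
        simp only [abs_div, abs_mul, abs_two, abs_of_pos (by norm_num : (0 : ℝ) < 6)]
    _ ≤ ‖B‖ * ‖u‖ ^ 2 * (‖L‖ * ‖u‖) / 2 + ‖T‖ * ‖u‖ ^ 3 * |a| / 6 := by
        gcongr
        exacts [abs_bilin_apply_self_le B u, L.le_opNorm u, T.abs_apply_const_le u]
    _ = _ := by ring

theorem exists_abs_taylor_mul_sub_le {m f : E → ℝ} (hm : ContDiff ℝ 4 m) {Cm : ℝ}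
    (hCm : ∀ z, ‖iteratedFDeriv ℝ 4 m z‖ ≤ Cm) (hf : ContDiff ℝ 2 f) {Cf : ℝ}
    (hCf : ∀ z, ‖iteratedFDeriv ℝ 2 f z‖ ≤ Cf) (x : E) :
    ∃ C ≥ 0, ∀ h, 0 ≤ h → h ≤ 1 → ∀ u,
      |(m (x + h • u) - m x - h * fderiv ℝ m x u) * f (x + h • u)
          - (h ^ 2 / 2 * f x * fderiv ℝ (fderiv ℝ m) x u u
            + h ^ 3 * cubicCoeff (fderiv ℝ (fderiv ℝ m) x) (fderiv ℝ f x)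
                (iteratedFDeriv ℝ 3 m x) (f x) u)|
        ≤ C * h ^ 4 * (1 + ‖u‖ ^ 6) := by
  have hCm0 : 0 ≤ Cm / 6 := by linarith [(norm_nonneg _).trans (hCm x)]
  have hCf0 : 0 ≤ Cf := (norm_nonneg _).trans (hCf x)
  refine ⟨‖fderiv ℝ (fderiv ℝ m) x‖ * Cf / 2
      + ‖iteratedFDeriv ℝ 3 m x‖ * (‖fderiv ℝ f x‖ + Cf) / 6
      + Cm / 6 * (|f x| + ‖fderiv ℝ f x‖ + Cf), by positivity, fun h h0 h1 u ↦ ?_⟩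
  have := abs_mul_expansion_sub_le (a := f x) (Cq := ‖fderiv ℝ (fderiv ℝ m) x‖) h0 h1
    (norm_nonneg u) (by positivity) (norm_nonneg _) hCm0 (norm_nonneg _) hCf0
    (abs_bilin_apply_self_le _ u) ((iteratedFDeriv ℝ 3 m x).abs_apply_const_le u)
    (abs_taylorRemainder_three_le hm hCm x u h)
    ((fderiv ℝ f x).le_opNorm u) (abs_taylorRemainder_one_le hf hCf x u h)
  simp only [cubicCoeff]
  convert this using 3
  ring

end Taylor

theorem integral_eq_zero_of_odd {G : Type*} [AddGroup G] [MeasurableSpace G] [MeasurableNeg G]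
    (μ : Measure G) [μ.IsNegInvariant] {F : G → ℝ} (hF : ∀ u, F (-u) = -F u) :
    ∫ u, F u ∂μ = 0 := by
  have := integral_neg_eq_self F μ
  simp only [hF, integral_neg] at this
  linarith

section Symmetry

variable {ι : Type*} [Fintype ι] {E : Type*} [NormedAddCommGroup E] [NormedSpace ℝ E]

theorem integral_comp_perm (σ : Equiv.Perm ι) (F : (ι → ℝ) → E) :
    ∫ u : ι → ℝ, F (fun l ↦ u (σ.symm l)) = ∫ u, F u := by
  convert (volume_measurePreserving_piCongrLeft (fun _ ↦ ℝ) σ).integral_comp' F using 4 with u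
  ext l
  simp [MeasurableEquiv.piCongrLeft, Equiv.piCongrLeft_apply_eq_cast]

theorem integral_comp_update_neg [DecidableEq ι] (i : ι) (F : (ι → ℝ) → E) :
    ∫ u, F (Function.update u i (-u i)) = ∫ u, F u := by
  let e : ι → ℝ ≃ᵐ ℝ := fun l ↦ if l = i then MeasurableEquiv.neg ℝ else MeasurableEquiv.refl ℝ
  have he : MeasurePreserving (MeasurableEquiv.piCongrRight e) := by
    refine volume_preserving_pi fun l ↦ ?_
    by_cases hl : l = i
    · simpa [e, hl] using Measure.measurePreserving_neg (volume : Measure ℝ)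
    · simpa [e, hl] using MeasurePreserving.id (volume : Measure ℝ)
  have he' : ∀ u, MeasurableEquiv.piCongrRight e u = Function.update u i (-u i) := fun u ↦ by
    ext l
    change e l (u l) = _
    by_cases hl : l = i <;> simp [e, hl]
  simpa [he'] using he.integral_comp' F

end Symmetry

theorem bilin_apply_eq_sum {p : ℕ} (B : (Fin p → ℝ) →L[ℝ] (Fin p → ℝ) →L[ℝ] ℝ) (u : Fin p → ℝ) :
    B u u = ∑ i, ∑ j, u i * u j * B (Pi.single i 1) (Pi.single j 1) := by
  conv_lhs => rw [pi_eq_sum_univ' u]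
  simp only [map_sum, map_smul, FunLike.coe_sum, FunLike.coe_smul, Finset.sum_apply,
    Pi.smul_apply, smul_eq_mul, mul_sum]
  rw [sum_comm]
  exact sum_congr rfl fun _ _ ↦ sum_congr rfl fun _ _ ↦ by ring

theorem sq_norm_le_sum_sq {p : ℕ} (u : Fin p → ℝ) : ‖u‖ ^ 2 ≤ ∑ i, u i ^ 2 := by
  rw [← Real.le_sqrt (norm_nonneg u) (by positivity)]
  refine (pi_norm_le_iff_of_nonneg (Real.sqrt_nonneg _)).mpr fun i ↦ ?_
  exact Real.abs_le_sqrt (single_le_sum (f := fun i ↦ u i ^ 2) (fun _ _ ↦ sq_nonneg _)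
    (mem_univ i))

theorem one_add_norm_pow_six_le {p : ℕ} (u : Fin p → ℝ) :
    1 + ‖u‖ ^ 6 ≤ 1 + (∑ i, u i ^ 2) ^ 3 := by
  have := pow_le_pow_left₀ (by positivity) (sq_norm_le_sum_sq u) 3
  rw [← pow_mul] at this
  exact add_le_add_right this 1

section MomentBounds

variable {p : ℕ} {K : (Fin p → ℝ) → ℝ}

theorem aestronglyMeasurable_of_integrable_weight_mul
    (hK : Integrable (fun u ↦ (1 + (∑ i, u i ^ 2) ^ 3) * K u)) : AEStronglyMeasurable K := by
  have hw : Continuous fun u : Fin p → ℝ ↦ 1 + (∑ i, u i ^ 2) ^ 3 := by fun_prop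
  have hw0 : ∀ u : Fin p → ℝ, 1 + (∑ i, u i ^ 2) ^ 3 ≠ 0 := fun u ↦ by positivity
  refine ((hw.inv₀ hw0).aestronglyMeasurable.mul hK.aestronglyMeasurable).congr ?_
  filter_upwards with u
  simp [inv_mul_cancel_left₀ (hw0 u)]

theorem integrable_mul_of_abs_le_weight (hK0 : ∀ u, 0 ≤ K u)
    (hK : Integrable (fun u ↦ (1 + (∑ i, u i ^ 2) ^ 3) * K u)) {g : (Fin p → ℝ) → ℝ}
    (hg : Continuous g) {c : ℝ} (hgc : ∀ u, |g u| ≤ c * (1 + ‖u‖ ^ 6)) :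
    Integrable (fun u ↦ g u * K u) := by
  refine (hK.const_mul c).mono' (hg.aestronglyMeasurable.mul
    (aestronglyMeasurable_of_integrable_weight_mul hK)) (.of_forall fun u ↦ ?_)
  have hc : 0 ≤ c := by simpa using (abs_nonneg _).trans (hgc 0)
  rw [norm_mul, Real.norm_eq_abs, Real.norm_of_nonneg (hK0 u), ← mul_assoc]
  have := hK0 u
  grw [hgc u, one_add_norm_pow_six_le u]

theorem abs_integral_mul_le_weight (hK0 : ∀ u, 0 ≤ K u)
    (hK : Integrable (fun u ↦ (1 + (∑ i, u i ^ 2) ^ 3) * K u)) {g : (Fin p → ℝ) → ℝ}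
    {c : ℝ} (hgc : ∀ u, |g u| ≤ c * (1 + ‖u‖ ^ 6)) :
    |∫ u, g u * K u| ≤ c * ∫ u, (1 + ‖u‖ ^ 6) * K u := by
  have hW : Integrable fun u ↦ (1 + ‖u‖ ^ 6) * K u :=
    integrable_mul_of_abs_le_weight hK0 hK (by fun_prop) (c := 1) fun u ↦ by
      rw [one_mul, abs_of_pos (by positivity)]
  rw [← Real.norm_eq_abs, ← integral_const_mul]
  refine norm_integral_le_of_norm_le (hW.const_mul _) (.of_forall fun u ↦ ?_)
  rw [norm_mul, Real.norm_eq_abs, Real.norm_of_nonneg (hK0 u), ← mul_assoc]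
  exact mul_le_mul_of_nonneg_right (hgc u) (hK0 u)

theorem integrable_coord_mul_coord_mul (hK0 : ∀ u, 0 ≤ K u)
    (hK : Integrable (fun u ↦ (1 + (∑ i, u i ^ 2) ^ 3) * K u)) (i j : Fin p) :
    Integrable fun u ↦ u i * u j * K u :=
  integrable_mul_of_abs_le_weight hK0 hK (by fun_prop) (c := 1) fun u ↦ by
    rw [abs_mul, one_mul]
    calc |u i| * |u j| ≤ ‖u‖ * ‖u‖ := by gcongr <;> exact norm_le_pi_norm u _
      _ ≤ 1 + ‖u‖ ^ 6 := by rw [← sq]; exact pow_le_one_add_pow (norm_nonneg u) (by norm_num)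

theorem integrable_bilin_mul (hint : ∀ i j, Integrable (fun u ↦ u i * u j * K u))
    (B : (Fin p → ℝ) →L[ℝ] (Fin p → ℝ) →L[ℝ] ℝ) : Integrable (fun u ↦ B u u * K u) := by
  simp_rw [bilin_apply_eq_sum B, sum_mul]
  exact integrable_finsetSum _ fun i _ ↦ integrable_finsetSum _ fun j _ ↦
    ((hint i j).mul_const (B (Pi.single i 1) (Pi.single j 1))).congr (.of_forall fun u ↦ by ring)

theorem integrable_cubicCoeff_mul (hK0 : ∀ u, 0 ≤ K u)
    (hK : Integrable (fun u ↦ (1 + (∑ i, u i ^ 2) ^ 3) * K u))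
    (B : (Fin p → ℝ) →L[ℝ] (Fin p → ℝ) →L[ℝ] ℝ) (L : (Fin p → ℝ) →L[ℝ] ℝ)
    (T : ContinuousMultilinearMap ℝ (fun _ : Fin 3 ↦ Fin p → ℝ) ℝ) (a : ℝ) :
    Integrable fun u ↦ cubicCoeff B L T a u * K u :=
  integrable_mul_of_abs_le_weight hK0 hK (by unfold cubicCoeff; fun_prop) fun u ↦
    (abs_cubicCoeff_le B L T a u).trans
      (by gcongr; exact pow_le_one_add_pow (norm_nonneg u) (by norm_num))

end MomentBounds

section RadialKernel

variable {p : ℕ} {K : (Fin p → ℝ) → ℝ} {k : ℝ → ℝ}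

theorem integral_sq_coord_mul_radial (hK : ∀ u, K u = k √(∑ i, u i ^ 2)) (i j : Fin p) :
    ∫ u, u i ^ 2 * K u = ∫ u, u j ^ 2 * K u := by
  rw [← integral_comp_perm (Equiv.swap i j)]
  congr 1 with u
  simp only [Equiv.symm_swap, Equiv.swap_apply_left]
  rw [hK, hK, Equiv.sum_comp (Equiv.swap i j) (fun l ↦ u l ^ 2)]

theorem integral_coord_mul_coord_mul_radial_of_ne (hK : ∀ u, K u = k √(∑ i, u i ^ 2))
    {i j : Fin p} (hij : i ≠ j) : ∫ u, u i * u j * K u = 0 := by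
  have h := integral_comp_update_neg i fun u ↦ u i * u j * K u
  have hK' : ∀ u : Fin p → ℝ, K (Function.update u i (-u i)) = K u := fun u ↦ by
    rw [hK, hK]
    congr 2
    refine sum_congr rfl fun l _ ↦ ?_
    by_cases hl : l = i <;> simp [hl]
  simp only [hK', Function.update_self, Function.update_of_ne hij.symm, neg_mul,
    integral_neg] at h
  linarith

theorem integral_coord_mul_coord_mul_radial (hK : ∀ u, K u = k √(∑ i, u i ^ 2)) (i j i₀ : Fin p) :
    ∫ u, u i * u j * K u = if i = j then ∫ u, u i₀ ^ 2 * K u else 0 := by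
  split_ifs with hij
  · subst hij
    simp only [← sq]
    exact integral_sq_coord_mul_radial hK i i₀
  · exact integral_coord_mul_coord_mul_radial_of_ne hK hij

theorem integral_bilin_mul_radial (hK : ∀ u, K u = k √(∑ i, u i ^ 2))
    (hint : ∀ i j, Integrable (fun u ↦ u i * u j * K u))
    (B : (Fin p → ℝ) →L[ℝ] (Fin p → ℝ) →L[ℝ] ℝ) (i₀ : Fin p) :
    ∫ u, B u u * K u = (∫ u, u i₀ ^ 2 * K u) * ∑ i, B (Pi.single i 1) (Pi.single i 1) := by
  have hint' : ∀ i j, Integrable fun u ↦ u i * u j * K u * B (Pi.single i 1) (Pi.single j 1) :=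
    fun i j ↦ (hint i j).mul_const _
  have hexp : (fun u ↦ B u u * K u)
      = fun u ↦ ∑ i, ∑ j, u i * u j * K u * B (Pi.single i 1) (Pi.single j 1) := by
    ext u
    simp only [bilin_apply_eq_sum B u, sum_mul]
    exact sum_congr rfl fun _ _ ↦ sum_congr rfl fun _ _ ↦ by ring
  rw [hexp, integral_finsetSum _ fun i _ ↦ integrable_finsetSum _ fun j _ ↦ hint' i j]
  simp_rw [integral_finsetSum _ fun j _ ↦ hint' _ j, integral_mul_const,
    integral_coord_mul_coord_mul_radial hK _ _ i₀, ite_mul, zero_mul, sum_ite_eq, mem_univ,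
    if_true, mul_sum]

theorem integral_cubicCoeff_mul_radial (hK : ∀ u, K u = k √(∑ i, u i ^ 2))
    (B : (Fin p → ℝ) →L[ℝ] (Fin p → ℝ) →L[ℝ] ℝ) (L : (Fin p → ℝ) →L[ℝ] ℝ)
    (T : ContinuousMultilinearMap ℝ (fun _ : Fin 3 ↦ Fin p → ℝ) ℝ) (a : ℝ) :
    ∫ u, cubicCoeff B L T a u * K u = 0 :=
  integral_eq_zero_of_odd _ fun u ↦ by simp [cubicCoeff_neg, hK]

theorem abs_integral_mul_radial_sub_le (hK0 : ∀ u, 0 ≤ K u)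
    (hK_int : Integrable (fun u ↦ (1 + (∑ i, u i ^ 2) ^ 3) * K u))
    (hK : ∀ u, K u = k √(∑ i, u i ^ 2)) {G : (Fin p → ℝ) → ℝ} (hG : Continuous G)
    (B : (Fin p → ℝ) →L[ℝ] (Fin p → ℝ) →L[ℝ] ℝ) (L : (Fin p → ℝ) →L[ℝ] ℝ)
    (T : ContinuousMultilinearMap ℝ (fun _ : Fin 3 ↦ Fin p → ℝ) ℝ) (a q r : ℝ) {C : ℝ}
    (hGC : ∀ u, |G u - (q * B u u + r * cubicCoeff B L T a u)| ≤ C * (1 + ‖u‖ ^ 6))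
    (i₀ : Fin p) :
    |(∫ u, G u * K u) - q * ((∫ u, u i₀ ^ 2 * K u) * ∑ i, B (Pi.single i 1) (Pi.single i 1))|
      ≤ C * ∫ u, (1 + ‖u‖ ^ 6) * K u := by
  set rem := fun u ↦ G u - (q * B u u + r * cubicCoeff B L T a u)
  have hmoment := integrable_coord_mul_coord_mul hK0 hK_int
  have hquad := (integrable_bilin_mul hmoment B).const_mul q
  have hcubic := (integrable_cubicCoeff_mul hK0 hK_int B L T a).const_mul r
  have hrem : Integrable fun u ↦ rem u * K u :=
    integrable_mul_of_abs_le_weight hK0 hK_int (by unfold rem cubicCoeff; fun_prop) hGC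
  have hsplit : ∀ u, G u * K u
      = q * (B u u * K u) + r * (cubicCoeff B L T a u * K u) + rem u * K u :=
    fun u ↦ by simp only [rem]; ring
  simp_rw [hsplit]
  rw [integral_add (f := fun u ↦ q * (B u u * K u) + r * (cubicCoeff B L T a u * K u))
      (hquad.add hcubic) hrem, integral_add hquad hcubic, integral_const_mul,
    integral_const_mul, integral_bilin_mul_radial hK hmoment B i₀,
    integral_cubicCoeff_mul_radial hK, mul_zero, add_zero, add_sub_cancel_left]
  exact abs_integral_mul_le_weight hK0 hK_int hGC

end RadialKernel

/-- Leading bias term of the function-value component: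
as `h → 0⁺`,
`∫ [m(x+hu) − m(x) − h ∇m(x)ᵀu] K(u) f(x+hu) du
  = (h²/2) μ₂ f(x) Tr(∇²m(x)) + O(h⁴)`,
for a nonnegative spherically symmetric kernel `K` with
`∫ (1+‖u‖₂⁶) K < ∞`, `m ∈ C⁴` with bounded derivatives up to order four,
and `f ∈ C²` with bounded derivatives up to order two. -/
theorem stmt8 (p : ℕ) (hp : 0 < p)
    (K : (Fin p → ℝ) → ℝ) (hK_nonneg : ∀ u, 0 ≤ K u)
    (k : ℝ → ℝ) (hK_sym : ∀ u, K u = k (Real.sqrt (∑ i, u i ^ 2)))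
    (hK_int : Integrable (fun u : Fin p → ℝ => (1 + (∑ i, u i ^ 2) ^ 3) * K u) volume)
    (m : (Fin p → ℝ) → ℝ) (hm : ContDiff ℝ 4 m)
    (hm_bdd : ∀ i : ℕ, 1 ≤ i → i ≤ 4 → ∃ C, ∀ y, ‖iteratedFDeriv ℝ i m y‖ ≤ C)
    (f : (Fin p → ℝ) → ℝ) (hf : ContDiff ℝ 2 f)
    (hf_bdd : ∀ i : ℕ, 1 ≤ i → i ≤ 2 → ∃ C, ∀ y, ‖iteratedFDeriv ℝ i f y‖ ≤ C)
    (x : Fin p → ℝ) :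
    ∃ C > 0, ∃ h₀ > 0, ∀ h : ℝ, 0 < h → h ≤ h₀ →
      |(∫ u : Fin p → ℝ,
          (m (x + h • u) - m x - h * fderiv ℝ m x u) * (K u * f (x + h • u))) -
          h ^ 2 / 2 * (∫ u : Fin p → ℝ, u ⟨0, hp⟩ ^ 2 * K u) * f x *
            (∑ i : Fin p, iteratedFDeriv ℝ 2 m x ![Pi.single i 1, Pi.single i 1])|
        ≤ C * h ^ 4 := by
  obtain ⟨Cm, hCm⟩ := hm_bdd 4 (by norm_num) le_rfl
  obtain ⟨Cf, hCf⟩ := hf_bdd 2 (by norm_num) le_rfl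
  obtain ⟨C, hC0, hC⟩ := exists_abs_taylor_mul_sub_le hm hCm hf hCf x
  set W := ∫ u, (1 + ‖u‖ ^ 6) * K u
  have hW : 0 ≤ W := integral_nonneg fun u ↦ mul_nonneg (by positivity) (hK_nonneg u)
  refine ⟨C * W + 1, by positivity, 1, one_pos, fun h h0 h1 ↦ ?_⟩
  have hmain := abs_integral_mul_radial_sub_le hK_nonneg hK_int hK_sym
    (G := fun u ↦ (m (x + h • u) - m x - h * fderiv ℝ m x u) * f (x + h • u))
    (by fun_prop) _ _ _ _ _ _ (hC h h0.le h1) ⟨0, hp⟩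
  have htrace : ∑ i, iteratedFDeriv ℝ 2 m x ![Pi.single i 1, Pi.single i 1]
      = ∑ i, fderiv ℝ (fderiv ℝ m) x (Pi.single i 1) (Pi.single i 1) := by
    simp [iteratedFDeriv_two_apply]
  calc _ = _ := by
        rw [htrace]
        congr 1
        simp_rw [mul_comm (K _) (f _), ← mul_assoc]
        ring
    _ ≤ C * h ^ 4 * W := hmain
    _ ≤ (C * W + 1) * h ^ 4 := by nlinarith [pow_pos h0 4]
end

section
/- For λ > 0 and α > 0, let γ_{λ,α}(t) = λ^α t^{α−1} e^{−λt} / Γ(α) for t > 0 denote the Gamma density with rate λ and shape α. Then for all λ > 0, α₁, α₂ > 0 and y > 0: ∫₀^y γ_{λ,α₁}(t) (t − α₁) γ_{λ,α₂}(y − t) dt = (α₁/(α₁ + α₂)) (y − α₁ − α₂) γ_{λ,α₁+α₂}(y). -/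
open MeasureTheory
open intervalIntegral Set

/-- The Gamma density with rate `lam` and shape `α`, extended by `0` to
nonpositive arguments: `γ_{λ,α}(t) = λ^α t^{α−1} e^{−λt} / Γ(α)` for
`t > 0`. -/
noncomputable def gammaDensity (lam α t : ℝ) : ℝ :=
  if 0 < t then lam ^ α * t ^ (α - 1) * Real.exp (-lam * t) / Real.Gamma α else 0

lemma beta_integrable {a b y : ℝ} (ha : 0 < a) (hb : 0 < b) (hy : 0 < y) :
    IntervalIntegrable (fun t => t ^ (a - 1) * (y - t) ^ (b - 1)) volume 0 y := by
  apply IntervalIntegrable.trans (b := y / 2)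
  · refine (intervalIntegrable_rpow' (by linarith)).mul_continuousOn ?_
    refine ContinuousOn.rpow_const (by fun_prop) fun t ht => Or.inl ?_
    rw [uIcc_of_le (by linarith)] at ht
    have := ht.2; intro h; linarith
  · have h2 : IntervalIntegrable (fun t => (y - t) ^ (b - 1)) volume (y / 2) y := by
      have := (intervalIntegrable_rpow' (a := 0) (b := y / 2) (r := b - 1)
        (by linarith)).comp_sub_left y
      simpa [show y - y / 2 = y / 2 by ring] using this.symm
    refine h2.continuousOn_mul ?_
    refine ContinuousOn.rpow_const (by fun_prop) fun t ht => Or.inl ?_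
    rw [uIcc_of_le (by linarith)] at ht
    have := ht.1; intro h; linarith

lemma beta_value {a b y : ℝ} (ha : 0 < a) (hb : 0 < b) (hy : 0 < y) :
    (∫ t in (0 : ℝ)..y, t ^ (a - 1) * (y - t) ^ (b - 1))
      = y ^ (a + b - 1) * (Real.Gamma a * Real.Gamma b / Real.Gamma (a + b)) := by
  have hGab : Real.Gamma (a + b) ≠ 0 := (Real.Gamma_pos_of_pos (by linarith)).ne'
  have hC := Complex.betaIntegral_scaled (a : ℂ) (b : ℂ) hy
  have hB : Complex.betaIntegral a b
      = (Real.Gamma a * Real.Gamma b / Real.Gamma (a + b) : ℝ) := by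
    have h := Complex.Gamma_mul_Gamma_eq_betaIntegral
      (s := (a : ℂ)) (t := (b : ℂ)) (by simpa using ha) (by simpa using hb)
    have hne : Complex.Gamma ((a : ℂ) + b) ≠ 0 := by
      rw [show ((a : ℂ) + b) = ((a + b : ℝ) : ℂ) by push_cast; ring, Complex.Gamma_ofReal]
      exact_mod_cast hGab
    have h2 : ((Real.Gamma (a + b) : ℂ)) * Complex.betaIntegral a b
        = (Real.Gamma a : ℂ) * Real.Gamma b := by
      rw [← Complex.Gamma_ofReal, ← Complex.Gamma_ofReal, ← Complex.Gamma_ofReal]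
      push_cast
      exact h.symm
    rw [Complex.ofReal_div, Complex.ofReal_mul, eq_div_iff (by exact_mod_cast hGab)]
    linear_combination h2
  have key : (((∫ t in (0 : ℝ)..y, t ^ (a - 1) * (y - t) ^ (b - 1)) : ℝ) : ℂ)
      = ((y ^ (a + b - 1) * (Real.Gamma a * Real.Gamma b / Real.Gamma (a + b)) : ℝ) : ℂ) := by
    rw [← intervalIntegral.integral_ofReal]
    have congr1 : (∫ t in (0:ℝ)..y, ((t ^ (a - 1) * (y - t) ^ (b - 1) : ℝ) : ℂ))
        = ∫ t in (0:ℝ)..y, (t : ℂ) ^ ((a : ℂ) - 1) * ((y : ℂ) - t) ^ ((b : ℂ) - 1) := by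
      refine intervalIntegral.integral_congr fun t ht => ?_
      rw [uIcc_of_le hy.le] at ht
      rw [Complex.ofReal_mul, Complex.ofReal_cpow ht.1, Complex.ofReal_cpow (by linarith [ht.2] : (0:ℝ) ≤ y - t)]
      push_cast
      ring
    rw [congr1, hC, hB]
    rw [show ((a : ℂ) + b - 1) = ((a + b - 1 : ℝ) : ℂ) by push_cast; ring,
      ← Complex.ofReal_cpow hy.le]
    push_cast
    ring
  exact_mod_cast key

/-- Convolution identity for moment-weighted Gamma densities:
`∫₀^y γ_{λ,α₁}(t) (t − α₁) γ_{λ,α₂}(y − t) dt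
  = (α₁/(α₁+α₂)) (y − α₁ − α₂) γ_{λ,α₁+α₂}(y)`. -/
theorem stmt16 (lam α₁ α₂ y : ℝ)
    (hlam : 0 < lam) (h1 : 0 < α₁) (h2 : 0 < α₂) (hy : 0 < y) :
    (∫ t in (0 : ℝ)..y,
        gammaDensity lam α₁ t * (t - α₁) * gammaDensity lam α₂ (y - t))
      = α₁ / (α₁ + α₂) * (y - α₁ - α₂) * gammaDensity lam (α₁ + α₂) y := by
  have hA : 0 < α₁ + α₂ := by linarith
  have hG1 := Real.Gamma_pos_of_pos h1
  have hG2 := Real.Gamma_pos_of_pos h2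
  have hGA := Real.Gamma_pos_of_pos hA
  set C : ℝ := lam ^ (α₁ + α₂) * Real.exp (-lam * y) / (Real.Gamma α₁ * Real.Gamma α₂) with hc
  have hint : (∫ t in (0:ℝ)..y, gammaDensity lam α₁ t * (t - α₁) * gammaDensity lam α₂ (y - t))
      = ∫ t in (0:ℝ)..y, (C * (t ^ (α₁ + 1 - 1) * (y - t) ^ (α₂ - 1))
          - C * α₁ * (t ^ (α₁ - 1) * (y - t) ^ (α₂ - 1))) := by
    apply intervalIntegral.integral_congr_ae
    have hne : ∀ᵐ t ∂(volume : Measure ℝ), t ≠ y := by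
      simp only [ae_iff, not_not]
      exact (by simp : {a : ℝ | a = y} = {y}) ▸ measure_singleton y
    filter_upwards [hne] with t hty ht
    rw [uIoc_of_le hy.le] at ht
    have ht0 : 0 < t := ht.1
    have h0yt : 0 < y - t := by
      have := lt_of_le_of_ne ht.2 hty; linarith
    simp only [gammaDensity, if_pos ht0, if_pos h0yt]
    have he : Real.exp (-lam * y) = Real.exp (-lam * t) * Real.exp (-lam * (y - t)) := by
      rw [← Real.exp_add]; ring_nf
    rw [show α₁ + 1 - 1 = (α₁ - 1) + 1 by ring, Real.rpow_add ht0, Real.rpow_one,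
      hc, Real.rpow_add hlam, he]
    field_simp
  rw [hint, intervalIntegral.integral_sub
      ((beta_integrable (by linarith : (0:ℝ) < α₁ + 1) h2 hy).const_mul C)
      ((beta_integrable h1 h2 hy).const_mul (C * α₁)),
    intervalIntegral.integral_const_mul, intervalIntegral.integral_const_mul,
    beta_value (by linarith) h2 hy, beta_value h1 h2 hy]
  simp only [gammaDensity, if_pos hy]
  rw [show α₁ + 1 + α₂ - 1 = (α₁ + α₂ - 1) + 1 by ring,
    show α₁ + 1 + α₂ = (α₁ + α₂) + 1 by ring,
    Real.Gamma_add_one hA.ne', Real.Gamma_add_one h1.ne',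
    Real.rpow_add hy, Real.rpow_one, hc]
  field_simp
  ring
end

section
/- For λ > 0, α > 0 and b ∈ ℝ, define g_{λ,α,b}(t) = γ_{λ,α}(t) · (1 + (t − α) b²) for t > 0, where γ_{λ,α}(t) = λ^α t^{α−1} e^{−λt} / Γ(α) is the Gamma density with rate λ and shape α. Then for all λ > 0, α₁, α₂ > 0, b₁, b₂ ∈ ℝ and y > 0: ∫₀^y g_{λ,α₁,b₁}(t) · g_{λ,α₂,b₂}(y − t) dt = γ_{λ,α₁+α₂}(y) · [ 1 + (y − α₁ − α₂) · (α₁ b₁² + α₂ b₂²)/(α₁ + α₂) + α₁ α₂ b₁² b₂² · ( y²/((α₁+α₂)(α₁+α₂+1)) − 2y/(α₁+α₂) + 1 ) ]. -/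
open MeasureTheory

/-- The "biased Gamma" density `g_{λ,α,b}(t) = γ_{λ,α}(t)·(1 + (t − α) b²)`. -/
noncomputable def biasedGamma (lam α b t : ℝ) : ℝ :=
  gammaDensity lam α t * (1 + (t - α) * b ^ 2)

/-!
For `0 < t < y` the product `γ_{λ,a}(t) γ_{λ,b}(y - t)` equals `γ_{λ,a+b}(y)` times the Beta(a, b)
density rescaled to `[0, y]`, because the exponentials combine to `e^{-λy}`. The product of the two
bias factors is a quadratic polynomial in `t`, so the convolution is `γ_{λ,α₁+α₂}(y)` times a
combination of the first three moments `y^k B(a + k, b) / B(a, b)` of that rescaled Beta law, and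
`B(a + 1, b) = a / (a + b) · B(a, b)` turns these into the rational functions of the statement.
-/

open Set ProbabilityTheory

lemma intervalIntegrable_rpow_mul_one_sub_rpow {a b : ℝ} (ha : 0 < a) (hb : 0 < b) :
    IntervalIntegrable (fun t : ℝ => t ^ (a - 1) * (1 - t) ^ (b - 1)) volume 0 1 := by
  refine (Complex.betaIntegral_convergent (u := a) (v := b) (by simpa) (by simpa)).norm.congr_uIoo
    fun t ht => ?_
  rw [uIoo_of_le zero_le_one] at ht
  have h1t : (1 : ℂ) - t = ((1 - t : ℝ) : ℂ) := by push_cast; ring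
  simp only [norm_mul, h1t, Complex.norm_cpow_eq_rpow_re_of_pos ht.1,
    Complex.norm_cpow_eq_rpow_re_of_pos (sub_pos.2 ht.2)]
  simp

lemma integral_rpow_mul_one_sub_rpow {a b : ℝ} (ha : 0 < a) (hb : 0 < b) :
    ∫ t in (0 : ℝ)..1, t ^ (a - 1) * (1 - t) ^ (b - 1) = beta a b := by
  have h : ((∫ t in (0 : ℝ)..1, t ^ (a - 1) * (1 - t) ^ (b - 1) : ℝ) : ℂ) =
      Complex.betaIntegral a b := by
    rw [← intervalIntegral.integral_ofReal]
    refine intervalIntegral.integral_congr_Ioo_of_le zero_le_one fun t ht => ?_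
    rw [Complex.ofReal_mul, Complex.ofReal_cpow ht.1.le, Complex.ofReal_cpow (sub_pos.2 ht.2).le]
    push_cast
    rfl
  rw [beta_eq_betaIntegralReal a b ha hb, ← h, Complex.ofReal_re]

lemma rpow_mul_sub_rpow_eq_rpow_mul_div {a b y t : ℝ} (hy : 0 < y) (ht : t ∈ Icc 0 y) :
    t ^ (a - 1) * (y - t) ^ (b - 1) =
      y ^ (a + b - 2) * ((t / y) ^ (a - 1) * (1 - t / y) ^ (b - 1)) := by
  have hyt : 0 ≤ y - t := sub_nonneg.2 ht.2
  rw [show 1 - t / y = (y - t) / y by field_simp, Real.div_rpow ht.1 hy.le,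
    Real.div_rpow hyt hy.le, show a + b - 2 = (a - 1) + (b - 1) by ring, Real.rpow_add hy]
  have : y ^ (a - 1) ≠ 0 := by positivity
  have : y ^ (b - 1) ≠ 0 := by positivity
  field_simp

lemma intervalIntegrable_rpow_mul_sub_rpow {a b y : ℝ} (ha : 0 < a) (hb : 0 < b) (hy : 0 < y) :
    IntervalIntegrable (fun t : ℝ => t ^ (a - 1) * (y - t) ^ (b - 1)) volume 0 y := by
  have h := ((intervalIntegrable_rpow_mul_one_sub_rpow ha hb).comp_mul_left
    (c := y⁻¹)).const_mul (y ^ (a + b - 2))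
  rw [zero_div, one_div, inv_inv] at h
  refine h.congr_uIoo fun t ht => ?_
  rw [uIoo_of_le hy.le] at ht
  simp only [← div_eq_inv_mul]
  exact (rpow_mul_sub_rpow_eq_rpow_mul_div hy (Ioo_subset_Icc_self ht)).symm

lemma integral_rpow_mul_sub_rpow {a b y : ℝ} (ha : 0 < a) (hb : 0 < b) (hy : 0 < y) :
    ∫ t in (0 : ℝ)..y, t ^ (a - 1) * (y - t) ^ (b - 1) = y ^ (a + b - 1) * beta a b := by
  rw [intervalIntegral.integral_congr fun t ht =>
      rpow_mul_sub_rpow_eq_rpow_mul_div hy (by rwa [uIcc_of_le hy.le] at ht),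
    intervalIntegral.integral_const_mul,
    intervalIntegral.integral_comp_div (fun x => x ^ (a - 1) * (1 - x) ^ (b - 1)) hy.ne',
    zero_div, div_self hy.ne', integral_rpow_mul_one_sub_rpow ha hb, smul_eq_mul,
    ← mul_assoc, ← Real.rpow_add_one hy.ne']
  ring_nf

theorem ProbabilityTheory.beta_add_one_left {a b : ℝ} (ha : a ≠ 0) (hab : a + b ≠ 0) :
    beta (a + 1) b = a / (a + b) * beta a b := by
  rw [beta, beta, add_right_comm, Real.Gamma_add_one ha, Real.Gamma_add_one hab, mul_assoc,
    mul_div_mul_comm]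

lemma gammaDensity_mul_gammaDensity_sub {lam a b y t : ℝ} (hlam : 0 < lam) (ha : 0 < a)
    (hb : 0 < b) (ht : t ∈ Ioo 0 y) :
    gammaDensity lam a t * gammaDensity lam b (y - t) =
      gammaDensity lam (a + b) y / (y ^ (a + b - 1) * beta a b) *
        (t ^ (a - 1) * (y - t) ^ (b - 1)) := by
  have hy : 0 < y := ht.1.trans ht.2
  have hyt : 0 < y - t := sub_pos.2 ht.2
  have hexp : Real.exp (-lam * y) = Real.exp (-lam * t) * Real.exp (-lam * (y - t)) := by
    rw [← Real.exp_add]; ring_nf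
  have := Real.Gamma_pos_of_pos ha
  have := Real.Gamma_pos_of_pos hb
  have := Real.Gamma_pos_of_pos (add_pos ha hb)
  have : 0 < y ^ (a + b - 1) := by positivity
  simp only [gammaDensity, beta, if_pos ht.1, if_pos hyt, if_pos hy, Real.rpow_add hlam, hexp]
  field_simp

lemma intervalIntegrable_gammaDensity_mul_gammaDensity_sub {lam a b y : ℝ} (hlam : 0 < lam)
    (ha : 0 < a) (hb : 0 < b) (hy : 0 < y) :
    IntervalIntegrable (fun t => gammaDensity lam a t * gammaDensity lam b (y - t)) volume 0 y :=
  ((intervalIntegrable_rpow_mul_sub_rpow ha hb hy).const_mul _).congr_uIoo fun t ht =>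
    (gammaDensity_mul_gammaDensity_sub hlam ha hb (by rwa [uIoo_of_le hy.le] at ht)).symm

lemma integral_pow_mul_gammaDensity_mul_gammaDensity_sub (k : ℕ) {lam a b y : ℝ} (hlam : 0 < lam)
    (ha : 0 < a) (hb : 0 < b) (hy : 0 < y) :
    ∫ t in (0 : ℝ)..y, t ^ k * (gammaDensity lam a t * gammaDensity lam b (y - t)) =
      gammaDensity lam (a + b) y * y ^ k * (beta (a + k) b / beta a b) := by
  have hak : 0 < a + k := by positivity
  have hpointwise : EqOn (fun t => t ^ k * (gammaDensity lam a t * gammaDensity lam b (y - t)))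
      (fun t => gammaDensity lam (a + b) y / (y ^ (a + b - 1) * beta a b) *
        (t ^ (a + k - 1) * (y - t) ^ (b - 1))) (Ioo 0 y) := fun t ht => by
    simp only [gammaDensity_mul_gammaDensity_sub hlam ha hb ht, add_sub_right_comm,
      Real.rpow_add_natCast ht.1.ne']
    ring
  rw [intervalIntegral.integral_congr_Ioo_of_le hy.le hpointwise,
    intervalIntegral.integral_const_mul, integral_rpow_mul_sub_rpow hak hb hy,
    show a + k + b - 1 = a + b - 1 + k by ring, Real.rpow_add_natCast hy.ne']
  have := beta_pos ha hb
  have : 0 < y ^ (a + b - 1) := by positivity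
  field_simp

/-- Exact convolution identity for biased Gamma densities:
`∫₀^y g_{λ,α₁,b₁}(t) g_{λ,α₂,b₂}(y−t) dt
  = γ_{λ,α₁+α₂}(y) [ 1 + (y − α₁ − α₂)(α₁b₁² + α₂b₂²)/(α₁+α₂)
      + α₁α₂b₁²b₂² ( y²/((α₁+α₂)(α₁+α₂+1)) − 2y/(α₁+α₂) + 1 ) ]`. -/
theorem stmt17 (lam α₁ α₂ b₁ b₂ y : ℝ)
    (hlam : 0 < lam) (h1 : 0 < α₁) (h2 : 0 < α₂) (hy : 0 < y) :
    (∫ t in (0 : ℝ)..y, biasedGamma lam α₁ b₁ t * biasedGamma lam α₂ b₂ (y - t))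
      = gammaDensity lam (α₁ + α₂) y *
          (1 + (y - α₁ - α₂) * (α₁ * b₁ ^ 2 + α₂ * b₂ ^ 2) / (α₁ + α₂) +
            α₁ * α₂ * b₁ ^ 2 * b₂ ^ 2 *
              (y ^ 2 / ((α₁ + α₂) * (α₁ + α₂ + 1)) - 2 * y / (α₁ + α₂) + 1)) := by
  set M := fun t => gammaDensity lam α₁ t * gammaDensity lam α₂ (y - t)
  have hint (k : ℕ) (c : ℝ) : IntervalIntegrable (fun t => c * (t ^ k * M t)) volume 0 y :=
    ((intervalIntegrable_gammaDensity_mul_gammaDensity_sub hlam h1 h2 hy).continuousOn_mul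
      (continuousOn_pow k)).const_mul c
  have hexpand : (fun t => biasedGamma lam α₁ b₁ t * biasedGamma lam α₂ b₂ (y - t)) = fun t =>
      (1 - α₁ * b₁ ^ 2) * (1 + (y - α₂) * b₂ ^ 2) * (t ^ 0 * M t) +
        (b₁ ^ 2 * (1 + (y - α₂) * b₂ ^ 2) - b₂ ^ 2 * (1 - α₁ * b₁ ^ 2)) * (t ^ 1 * M t) +
        -(b₁ ^ 2 * b₂ ^ 2) * (t ^ 2 * M t) := by
    ext t
    simp only [biasedGamma, M]
    ring
  rw [hexpand, intervalIntegral.integral_add ((hint 0 _).add (hint 1 _)) (hint 2 _),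
    intervalIntegral.integral_add (hint 0 _) (hint 1 _),
    intervalIntegral.integral_const_mul, intervalIntegral.integral_const_mul,
    intervalIntegral.integral_const_mul,
    integral_pow_mul_gammaDensity_mul_gammaDensity_sub 0 hlam h1 h2 hy,
    integral_pow_mul_gammaDensity_mul_gammaDensity_sub 1 hlam h1 h2 hy,
    integral_pow_mul_gammaDensity_mul_gammaDensity_sub 2 hlam h1 h2 hy]
  have hβ := beta_pos h1 h2
  simp only [Nat.cast_zero, add_zero, Nat.cast_one, Nat.cast_ofNat,
    show α₁ + 2 = α₁ + 1 + 1 by ring, beta_add_one_left h1.ne' (add_pos h1 h2).ne',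
    beta_add_one_left (by positivity : α₁ + 1 ≠ 0) (by positivity : α₁ + 1 + α₂ ≠ 0)]
  field_simp
  ring
end
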